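/- arXiv:1511.05201 — 2 statements merged into one kernel-verified Lean document; each statement's English description precedes it below -/
import Mathlib

section
/- In the Bernoulli(p) group testing model, the probability that every one of the n-k nondefective items appears in at least one negative test equals E[(1 - q^M)^{n-k}], where q = 1-p and M ~ Binomial(T, q^k). -/
/-!
Let `q = 1 - p` be the probability that an item is absent from a test. The set `S` of negative
tests is a function of the defective rows of the test matrix only, hence independent of the
nondefective rows. The columns restricted to `K` are i.i.d. and each is negative with probability
`q ^ k`, so `|S| ~ Binomial(T, q ^ k)`; given `S`, the nondefective rows are i.i.d. and each has a
`true` entry in `S` with probability `1 - q ^ |S|`.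
-/

open MeasureTheory ENNReal ProbabilityTheory Finset

section ProductMeasure

variable {ι κ X : Type*} [Fintype ι] [Fintype κ] [MeasurableSpace X] (μ : Measure X)

theorem measurePreserving_curry [SigmaFinite μ] :
    MeasurePreserving (MeasurableEquiv.curry ι κ X) (Measure.pi fun _ : ι × κ => μ)
      (Measure.pi fun _ : ι => Measure.pi fun _ : κ => μ) := by
  refine MeasurePreserving.symm _ ⟨(MeasurableEquiv.curry ι κ X).symm.measurable, ?_⟩
  refine (Measure.pi_eq fun s _ => ?_).symm
  have hbox : (MeasurableEquiv.curry ι κ X).symm ⁻¹' Set.univ.pi s =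
      Set.univ.pi fun i => Set.univ.pi fun j => s (i, j) := by
    ext ω
    simp [MeasurableEquiv.coe_curry_symm]
  simp only [MeasurableEquiv.map_apply, hbox, Measure.pi_pi]
  exact (Fintype.prod_prod_type fun x : ι × κ => μ (s x)).symm

theorem measure_pi_forall_row_mem [SigmaFinite μ] (s : ι → Set (κ → X)) :
    (Measure.pi fun _ : ι × κ => μ) {ω | ∀ i, (fun j => ω (i, j)) ∈ s i} =
      ∏ i, (Measure.pi fun _ : κ => μ) (s i) := by
  rw [← Measure.pi_pi, ← (measurePreserving_curry μ).measure_preimage_equiv]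
  congr 1
  ext ω
  simp only [Set.mem_preimage, Set.mem_univ_pi, MeasurableEquiv.coe_curry]
  rfl

theorem measure_pi_forall_col_mem [SigmaFinite μ] (s : κ → Set (ι → X)) :
    (Measure.pi fun _ : ι × κ => μ) {ω | ∀ j, (fun i => ω (i, j)) ∈ s j} =
      ∏ j, (Measure.pi fun _ : ι => μ) (s j) := by
  rw [← measure_pi_forall_row_mem,
    ← (measurePreserving_piCongrLeft (fun _ => μ) (Equiv.prodComm κ ι)).measure_preimage_equiv]
  congr 1

variable [IsProbabilityMeasure μ]

theorem measure_pi_forall_mem_mem [DecidableEq ι] (S : Finset ι) (s : Set X) :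
    (Measure.pi fun _ : ι => μ) {f | ∀ i ∈ S, f i ∈ s} = μ s ^ #S := by
  have hbox : {f : ι → X | ∀ i ∈ S, f i ∈ s} =
      Set.univ.pi fun i => if i ∈ S then s else Set.univ := by
    ext f
    simp only [Set.mem_ofPred_eq, Set.mem_univ_pi]
    refine forall_congr' fun i => ?_
    split_ifs with hi <;> simp [hi]
  rw [hbox, Measure.pi_pi]
  simp [apply_ite]

theorem measure_pi_exists_mem_notMem [DecidableEq ι] (S : Finset ι) {s : Set X}
    (hs : MeasurableSet s) :
    (Measure.pi fun _ : ι => μ) {f | ∃ i ∈ S, f i ∉ s} = 1 - μ s ^ #S := by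
  have hforall : MeasurableSet {f : ι → X | ∀ i ∈ S, f i ∈ s} := by
    simp only [Set.ofPred_forall]
    exact .iInter fun i => .iInter fun _ => measurable_pi_apply i hs
  rw [← measure_pi_forall_mem_mem, ← prob_compl_eq_one_sub hforall]
  congr 1
  ext f
  simp

theorem measure_pi_inter_eq_mul_of_dependsOn [Countable X] [MeasurableSingletonClass X]
    [DecidableEq ι] {s t : Set (ι → X)} (A : Finset ι)
    (hs : DependsOn (· ∈ s) A) (ht : DependsOn (· ∈ t) ↑Aᶜ) :
    (Measure.pi fun _ => μ) (s ∩ t) =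
      (Measure.pi fun _ => μ) s * (Measure.pi fun _ => μ) t := by
  have hindep := (iIndepFun_pi (X := fun _ => id) (μ := fun _ : ι => μ)
    fun _ => aemeasurable_id).indepFun_finset A Aᶜ disjoint_compl_right
      fun i => measurable_pi_apply i
  have hpreimage : ∀ (B : Finset ι) (u : Set (ι → X)), DependsOn (· ∈ u) B →
      (fun ω (i : B) => ω i) ⁻¹' ((fun ω (i : B) => ω i) '' u) = u := by
    intro B u hu
    ext ω
    constructor
    · rintro ⟨ω', hω', heq⟩
      exact (hu fun i hi => congrFun heq ⟨i, hi⟩).mp hω'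
    · exact fun hω => ⟨ω, hω, rfl⟩
  have := hindep.measure_inter_preimage_eq_mul _ _
    (DiscreteMeasurableSpace.forall_measurableSet ((fun ω (i : A) => ω i) '' s))
    (DiscreteMeasurableSpace.forall_measurableSet ((fun ω (i : ↥Aᶜ) => ω i) '' t))
  simpa only [id, hpreimage A s hs, hpreimage Aᶜ t (by simpa using ht)] using this

end ProductMeasure

section GroupTesting

variable {ι κ : Type*} [Fintype κ] (K : Finset ι)

def negativeTests (ω : ι × κ → Bool) : Finset κ := {t | ∀ j ∈ K, ω (j, t) = false}

def compSucceeds : Set (ι × κ → Bool) :=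
  {ω | ∀ i, i ∉ K → ∃ t, (∀ j ∈ K, ω (j, t) = false) ∧ ω (i, t) = true}

def coveredBy (S : Finset κ) : Set (ι × κ → Bool) :=
  {ω | ∀ i ∉ K, ∃ t ∈ S, ω (i, t) = true}

theorem preimage_negativeTests_inter_compSucceeds (S : Finset κ) :
    negativeTests K ⁻¹' {S} ∩ compSucceeds K = negativeTests K ⁻¹' {S} ∩ coveredBy K S := by
  ext ω
  simp only [Set.mem_inter_iff, Set.mem_preimage, Set.mem_singleton_iff, and_congr_right_iff]
  rintro rfl
  simp [compSucceeds, coveredBy, negativeTests]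

variable [Fintype ι] [DecidableEq ι] [DecidableEq κ] (μ : Measure Bool) [IsProbabilityMeasure μ]

theorem measure_preimage_negativeTests (S : Finset κ) :
    (Measure.pi fun _ : ι × κ => μ) (negativeTests K ⁻¹' {S}) =
      (μ {false} ^ #K) ^ #S * (1 - μ {false} ^ #K) ^ (Fintype.card κ - #S) := by
  set Z : Set (ι → Bool) := {c | ∀ j ∈ K, c j ∈ ({false} : Set Bool)}
  have hcols : negativeTests K ⁻¹' {S} =
      {ω | ∀ t, (fun i => ω (i, t)) ∈ if t ∈ S then Z else Zᶜ} := by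
    ext ω
    simp only [Set.mem_preimage, Set.mem_singleton_iff, Finset.ext_iff, negativeTests,
      Finset.mem_filter, Finset.mem_univ, true_and, Set.mem_ofPred_eq]
    refine forall_congr' fun t => ?_
    split_ifs with ht <;> simp [Z, ht]
  have hZ : (Measure.pi fun _ : ι => μ) Z = μ {false} ^ #K := measure_pi_forall_mem_mem μ K _
  have hZc : (Measure.pi fun _ : ι => μ) Zᶜ = 1 - μ {false} ^ #K := by
    rw [← measure_pi_exists_mem_notMem μ K (measurableSet_singleton false)]
    congr 1
    ext c
    simp [Z]
  rw [hcols, measure_pi_forall_col_mem]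
  simp only [apply_ite, hZ, hZc, Finset.prod_ite, Finset.prod_const]
  simp [Finset.filter_not, Finset.card_univ_sdiff]

theorem measure_coveredBy (S : Finset κ) :
    (Measure.pi fun _ : ι × κ => μ) (coveredBy K S) =
      (1 - μ {false} ^ #S) ^ (Fintype.card ι - #K) := by
  have hrows : coveredBy K S = {ω | ∀ i, (fun t => ω (i, t)) ∈
      if i ∈ K then Set.univ else {r : κ → Bool | ∃ t ∈ S, r t ∉ ({false} : Set Bool)}} := by
    ext ω
    simp only [coveredBy, Set.mem_ofPred_eq]
    refine forall_congr' fun i => ?_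
    split_ifs with hi <;> simp [hi]
  rw [hrows, measure_pi_forall_row_mem]
  simp only [apply_ite, measure_univ,
    measure_pi_exists_mem_notMem μ S (measurableSet_singleton false), Finset.prod_ite,
    Finset.prod_const_one, one_mul, Finset.prod_const]
  simp [Finset.filter_not, Finset.card_univ_sdiff]

theorem measure_preimage_negativeTests_inter_coveredBy (S : Finset κ) :
    (Measure.pi fun _ : ι × κ => μ) (negativeTests K ⁻¹' {S} ∩ coveredBy K S) =
      (Measure.pi fun _ : ι × κ => μ) (negativeTests K ⁻¹' {S}) *
        (Measure.pi fun _ : ι × κ => μ) (coveredBy K S) := by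
  refine measure_pi_inter_eq_mul_of_dependsOn μ (K ×ˢ univ) (fun ω ω' h => ?_)
    fun ω ω' h => ?_
  · have hneg : negativeTests K ω = negativeTests K ω' := by
      ext t
      simp +contextual [negativeTests, h (_, t)]
    simp only [Set.mem_preimage, hneg]
  · simp +contextual [coveredBy, h (_, _)]

theorem measure_compSucceeds :
    (Measure.pi fun _ : ι × κ => μ) (compSucceeds K) =
      ∑ m ∈ range (Fintype.card κ + 1),
        ((Fintype.card κ).choose m : ℝ≥0∞) * (μ {false} ^ #K) ^ m *
          (1 - μ {false} ^ #K) ^ (Fintype.card κ - m) *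
            (1 - μ {false} ^ m) ^ (Fintype.card ι - #K) := by
  set P := Measure.pi fun _ : ι × κ => μ
  set g : ℕ → ℝ≥0∞ := fun m => (μ {false} ^ #K) ^ m *
    (1 - μ {false} ^ #K) ^ (Fintype.card κ - m) * (1 - μ {false} ^ m) ^ (Fintype.card ι - #K)
  calc P (compSucceeds K)
      = ∑ S : Finset κ, P (negativeTests K ⁻¹' {S} ∩ compSucceeds K) := by
        rw [← Measure.restrict_apply_univ, ← Set.preimage_univ (f := negativeTests K),
          ← Finset.coe_univ, ← sum_measure_preimage_singleton _
            fun _ _ => DiscreteMeasurableSpace.forall_measurableSet _]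
        simp only [Measure.restrict_apply (DiscreteMeasurableSpace.forall_measurableSet _)]
    _ = ∑ S : Finset κ, g #S := by
        simp only [preimage_negativeTests_inter_compSucceeds, P,
          measure_preimage_negativeTests_inter_coveredBy, measure_preimage_negativeTests,
          measure_coveredBy, g]
    _ = _ := by
        rw [← Finset.powerset_univ, Finset.sum_powerset_apply_card g, Finset.card_univ]
        simp only [g, nsmul_eq_mul, mul_assoc]

end GroupTesting

/-- In the Bernoulli(p) group testing model, the probability that every one of the
`n - k` nondefective items appears in at least one negative test equals
`E[(1 - q^M)^{n-k}]`, where `q = 1 - p` and `M ~ Binomial(T, q^k)`. -/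
theorem bernoulli_group_testing_comp_success_prob
    (n T k : ℕ) (p : ℝ≥0∞) (hp : p ≤ 1) (K : Finset (Fin n)) (hK : K.card = k)
    (μ : Measure ((Fin n × Fin T) → Bool))
    (hμ : μ = Measure.pi fun _ => (PMF.bernoulli p.toNNReal (by simpa using ENNReal.toNNReal_mono ENNReal.one_ne_top hp)).toMeasure) :
    μ {ω | ∀ i : Fin n, i ∉ K →
        ∃ t : Fin T, (∀ j ∈ K, ω (j, t) = false) ∧ ω (i, t) = true} =
      ∑ m ∈ Finset.range (T + 1),
        (T.choose m : ℝ≥0∞) * ((1 - p) ^ k) ^ m * (1 - (1 - p) ^ k) ^ (T - m) *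
          (1 - (1 - p) ^ m) ^ (n - k) := by
  subst hμ
  refine (measure_compSucceeds K _).trans ?_
  -- the statement's proof of `p.toNNReal ≤ 1` has type `p.toNNReal ≤ ENNReal.toNNReal 1`;
  -- reusing it verbatim lets `simp` match the PMF syntactically
  have hq : PMF.bernoulli p.toNNReal
      (by simpa using ENNReal.toNNReal_mono ENNReal.one_ne_top hp) false = 1 - p := by
    refine (PMF.bernoulli_apply _ false).trans ?_
    rw [cond_false, ENNReal.coe_sub, ENNReal.coe_one,
      ENNReal.coe_toNNReal (ne_top_of_le_ne_top one_ne_top hp)]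
  simp only [PMF.toMeasure_apply_singleton _ _ (measurableSet_singleton _), hq, hK,
    Fintype.card_fin]
end

section
/- For k ≥ 2, T ∈ ℕ, and r ∈ (0, 1/(2k)], the inclusion–exclusion expansion gives: probability that some defective is never uniquely contained, P(⋃_{i∈K} A_iᶜ) = -∑_{j=1}^{k} (-1)^j (k choose j)(1 - j r)^T ≥ k(1-r)^T (1 - (k/2) ((1-2r)/(1-r))^T). -/
/-!
The events `Bᵢ = Aᵢᶜ` are exchangeable: the measure of `⋂_{i ∈ J} Bᵢ` depends only on `|J|`.
Inclusion–exclusion therefore collapses to a sum over `j = |J|` weighted by `k choose j`.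
For the lower bound, Bonferroni's inequality `P(⋃ Bᵢ) ≥ ∑ P(Bᵢ) - ∑_{i < i'} P(Bᵢ ∩ Bᵢ')`
holds pointwise for indicators, because a point lying in `n ≥ 1` of the sets contributes
`n - (n choose 2) ≤ 1`; it gives `k (1-r)^T - (k choose 2) (1-2r)^T`, and `(k choose 2) ≤ k²/2`.
-/

open MeasureTheory ENNReal Finset

theorem Nat.sub_one_le_choose_two (n : ℕ) : n - 1 ≤ n.choose 2 := by
  cases n with
  | zero => simp
  | succ m => simp [Nat.choose_succ_succ]

theorem Finset.sum_indicator_sub_sum_powersetCard_two_le_indicator_biUnion {ι α R : Type*}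
    [CommRing R] [PartialOrder R] [IsOrderedRing R]
    (t : Finset ι) (s : ι → Set α) (a : α) :
    ∑ i ∈ t, (s i).indicator (1 : α → R) a
        - ∑ u ∈ t.powersetCard 2, (⋂ i ∈ u, s i).indicator 1 a ≤
      (⋃ i ∈ t, s i).indicator 1 a := by
  classical
  set S := t.filter (a ∈ s ·)
  have h_sum : ∑ i ∈ t, (s i).indicator (1 : α → R) a = #S := by
    simp [Set.indicator_apply, sum_boole, S]
  have h_pairs :
      ∑ u ∈ t.powersetCard 2, (⋂ i ∈ u, s i).indicator (1 : α → R) a = (#S).choose 2 := by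
    have h_filter : (t.powersetCard 2).filter (fun u => ∀ i ∈ u, a ∈ s i) = S.powersetCard 2 := by
      ext u
      simp only [mem_filter, mem_powersetCard, S, subset_iff]
      grind
    simp [Set.indicator_apply, sum_boole, h_filter]
  have h_union : (⋃ i ∈ t, s i).indicator (1 : α → R) a = if S.Nonempty then 1 else 0 := by
    simp [Set.indicator_apply, S, filter_nonempty_iff]
  rw [h_sum, h_pairs, h_union, sub_le_iff_le_add]
  split_ifs with hS
  · have := Nat.sub_one_le_choose_two #S
    simpa [add_comm] using (Nat.mono_cast (by omega : #S ≤ (#S).choose 2 + 1) : (#S : R) ≤ _)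
  · simp [not_nonempty_iff_eq_empty.1 hS]

theorem MeasureTheory.sum_measureReal_sub_sum_powersetCard_two_le_measureReal_biUnion
    {X ι : Type*} [MeasurableSpace X] {μ : Measure X} {t : Finset ι} {s : ι → Set X}
    (hs : ∀ i ∈ t, MeasurableSet (s i)) (hf : ∀ i ∈ t, μ (s i) ≠ ∞) :
    ∑ i ∈ t, μ.real (s i) - ∑ u ∈ t.powersetCard 2, μ.real (⋂ i ∈ u, s i) ≤
      μ.real (⋃ i ∈ t, s i) := by
  have h_int {v : Set X} (hv : MeasurableSet v) (hfin : μ v ≠ ∞) :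
      Integrable (v.indicator (1 : X → ℝ)) μ :=
    (integrableOn_const hfin).integrable_indicator hv
  have hs_inter (u) (hu : u ∈ t.powersetCard 2) : MeasurableSet (⋂ i ∈ u, s i) :=
    u.measurableSet_biInter fun j hj => hs j ((mem_powersetCard.1 hu).1 hj)
  have h_single (i) (hi : i ∈ t) : Integrable ((s i).indicator (1 : X → ℝ)) μ :=
    h_int (hs i hi) (hf i hi)
  have h_inter (u) (hu : u ∈ t.powersetCard 2) :
      Integrable ((⋂ i ∈ u, s i).indicator (1 : X → ℝ)) μ := by
    obtain ⟨hut, hcard⟩ := mem_powersetCard.1 hu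
    obtain ⟨i, hi⟩ := card_pos.1 (by omega : 0 < #u)
    exact h_int (hs_inter u hu)
      (measure_ne_top_of_subset (Set.biInter_subset_of_mem hi) (hf i (hut hi)))
  have h_union : Integrable ((⋃ i ∈ t, s i).indicator (1 : X → ℝ)) μ :=
    h_int (t.measurableSet_biUnion hs)
      (measure_biUnion_lt_top t.finite_toSet fun i hi => (hf i hi).lt_top).ne
  calc ∑ i ∈ t, μ.real (s i) - ∑ u ∈ t.powersetCard 2, μ.real (⋂ i ∈ u, s i)
      = ∫ x, (∑ i ∈ t, (s i).indicator 1 x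
          - ∑ u ∈ t.powersetCard 2, (⋂ i ∈ u, s i).indicator 1 x) ∂μ := by
        rw [integral_sub (integrable_finsetSum _ h_single) (integrable_finsetSum _ h_inter),
          integral_finsetSum _ h_single, integral_finsetSum _ h_inter]
        congr 1 <;> refine sum_congr rfl fun u hu => ?_
        · exact (integral_indicator_one (hs u hu)).symm
        · exact (integral_indicator_one (hs_inter u hu)).symm
    _ ≤ ∫ x, (⋃ i ∈ t, s i).indicator 1 x ∂μ :=
        integral_mono ((integrable_finsetSum _ h_single).sub (integrable_finsetSum _ h_inter))
          h_union fun x => sum_indicator_sub_sum_powersetCard_two_le_indicator_biUnion t s x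
    _ = μ.real (⋃ i ∈ t, s i) := integral_indicator_one (t.measurableSet_biUnion hs)

theorem Finset.sum_powerset_filter_nonempty_apply_card {α M : Type*} [AddCommMonoid M]
    (s : Finset α) (f : ℕ → M) :
    ∑ u ∈ s.powerset with u.Nonempty, f #u = ∑ j ∈ Icc 1 #s, (#s).choose j • f j := by
  have h := sum_powerset_apply_card (fun j => if j ≠ 0 then f j else 0) (x := s)
  simp only [smul_ite, smul_zero, ← sum_filter, card_ne_zero] at h
  rw [h]
  congr 1
  ext j
  simp only [mem_filter, mem_range, mem_Icc]
  omega

theorem mul_le_half_of_le_one_div_two_mul {j k : ℕ} (hj : j ≤ k) {r : ℝ}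
    (hr : r ≤ 1 / (2 * k)) : (j : ℝ) * r ≤ 1 / 2 := by
  rcases lt_or_ge r 0 with hr0 | hr0
  · nlinarith [j.cast_nonneg (α := ℝ)]
  rcases Nat.eq_zero_or_pos k with rfl | hk
  · simp_all
  have hk' : (0 : ℝ) < k := by exact_mod_cast hk
  calc (j : ℝ) * r ≤ k * r := by gcongr
    _ ≤ k * (1 / (2 * k)) := by gcongr
    _ = 1 / 2 := by field_simp

theorem mul_pow_mul_one_sub_div_pow_le (n T : ℕ) {x y : ℝ} (hx : x ≠ 0) (hy : 0 ≤ y) :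
    n * x ^ T * (1 - n / 2 * (y / x) ^ T) ≤ n * x ^ T - n.choose 2 * y ^ T := by
  have h_eq : n * x ^ T * (1 - n / 2 * (y / x) ^ T) = n * x ^ T - (n : ℝ) ^ 2 / 2 * y ^ T := by
    rw [div_pow]
    field_simp
  rw [h_eq, Nat.cast_choose_two]
  have : (0 : ℝ) ≤ n := n.cast_nonneg
  have : 0 ≤ y ^ T := pow_nonneg hy T
  nlinarith

section Exchangeable

variable {X ι : Type*} [MeasurableSpace X] [Fintype ι] {μ : Measure X} {s : ι → Set X}
  {g : ℕ → ℝ}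

theorem measureReal_iUnion_eq_sum_choose_of_exchangeable (hs : ∀ i, MeasurableSet (s i))
    (hf : ∀ i, μ (s i) ≠ ∞) (hg : ∀ J : Finset ι, J.Nonempty → μ.real (⋂ i ∈ J, s i) = g #J) :
    μ.real (⋃ i, s i) =
      -∑ j ∈ Icc 1 (Fintype.card ι), (-1 : ℝ) ^ j * (Fintype.card ι).choose j * g j :=
  calc μ.real (⋃ i, s i) = μ.real (⋃ i ∈ univ, s i) := by simp
    _ = ∑ u ∈ univ.powerset with u.Nonempty, (-1 : ℝ) ^ (#u + 1) * g #u := by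
        rw [measureReal_biUnion_eq_sum_powerset (fun i _ => hs i) fun i _ => hf i]
        exact sum_congr rfl fun u hu => by rw [hg u (mem_filter.1 hu).2]
    _ = _ := by
        rw [sum_powerset_filter_nonempty_apply_card _ fun j => (-1 : ℝ) ^ (j + 1) * g j,
          card_univ, ← sum_neg_distrib]
        exact sum_congr rfl fun j _ => by rw [nsmul_eq_mul]; ring

theorem card_mul_sub_choose_two_mul_le_measureReal_iUnion_of_exchangeable
    (hs : ∀ i, MeasurableSet (s i)) (hf : ∀ i, μ (s i) ≠ ∞)
    (hg : ∀ J : Finset ι, J.Nonempty → μ.real (⋂ i ∈ J, s i) = g #J) :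
    Fintype.card ι * g 1 - (Fintype.card ι).choose 2 * g 2 ≤ μ.real (⋃ i, s i) :=
  calc Fintype.card ι * g 1 - (Fintype.card ι).choose 2 * g 2
      = ∑ i, μ.real (s i) - ∑ u ∈ univ.powersetCard 2, μ.real (⋂ i ∈ u, s i) := by
        have h_single (i : ι) : μ.real (s i) = g 1 := by simpa using hg {i} (singleton_nonempty i)
        have h_pair (u : Finset ι) (hu : u ∈ univ.powersetCard 2) :
            μ.real (⋂ i ∈ u, s i) = g 2 := by
          have hcard := (mem_powersetCard.1 hu).2
          rw [hg u (card_pos.1 (by omega)), hcard]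
        rw [sum_congr rfl fun i _ => h_single i, sum_congr rfl h_pair]
        simp [card_powersetCard]
    _ ≤ μ.real (⋃ i ∈ univ, s i) :=
        sum_measureReal_sub_sum_powersetCard_two_le_measureReal_biUnion
          (fun i _ => hs i) fun i _ => hf i
    _ = μ.real (⋃ i, s i) := by simp

end Exchangeable

theorem prob_union_compl_lower_bound_general {Ω : Type*} [MeasurableSpace Ω]
    (μ : Measure Ω) (k T : ℕ) (r : ℝ)
    (hr1 : r ≤ 1 / (2 * k))
    (A : Fin k → Set Ω) (hA : ∀ i, MeasurableSet (A i))
    (hJ : ∀ J : Finset (Fin k), J.Nonempty →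
      μ (⋂ i ∈ J, (A i)ᶜ) = ENNReal.ofReal ((1 - (J.card : ℝ) * r) ^ T)) :
    (μ (⋃ i, (A i)ᶜ)).toReal =
      -∑ j ∈ Finset.Icc 1 k,
        (-1 : ℝ) ^ j * (k.choose j : ℝ) * (1 - (j : ℝ) * r) ^ T ∧
    (k : ℝ) * (1 - r) ^ T * (1 - (k : ℝ) / 2 * ((1 - 2 * r) / (1 - r)) ^ T) ≤
      -∑ j ∈ Finset.Icc 1 k,
        (-1 : ℝ) ^ j * (k.choose j : ℝ) * (1 - (j : ℝ) * r) ^ T := by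
  have hB : ∀ i, MeasurableSet (A i)ᶜ := fun i => (hA i).compl
  have h_real (J : Finset (Fin k)) (hJne : J.Nonempty) :
      μ.real (⋂ i ∈ J, (A i)ᶜ) = (1 - (#J : ℝ) * r) ^ T := by
    have := mul_le_half_of_le_one_div_two_mul (card_finset_fin_le J) hr1
    rw [measureReal_def, hJ J hJne, toReal_ofReal (pow_nonneg (by linarith) T)]
  have h_finite (i : Fin k) : μ (A i)ᶜ ≠ ∞ := by
    simpa using (hJ {i} (singleton_nonempty i)).trans_ne ofReal_ne_top
  have h_eq := measureReal_iUnion_eq_sum_choose_of_exchangeable hB h_finite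
    (g := fun j => (1 - (j : ℝ) * r) ^ T) h_real
  rw [Fintype.card_fin, measureReal_def] at h_eq
  refine ⟨h_eq, h_eq ▸ ?_⟩
  have hr_half : 2 * r ≤ 1 := by
    rcases Nat.eq_zero_or_pos k with rfl | hk
    · -- `1 / (2 * 0) = 0`, so `hr1` reads `r ≤ 0`
      simp only [CharP.cast_eq_zero, mul_zero] at hr1
      linarith
    · linarith [mul_le_half_of_le_one_div_two_mul hk hr1]
  calc (k : ℝ) * (1 - r) ^ T * (1 - (k : ℝ) / 2 * ((1 - 2 * r) / (1 - r)) ^ T)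
      ≤ k * (1 - (1 : ℕ) * r) ^ T - k.choose 2 * (1 - (2 : ℕ) * r) ^ T := by
        simpa using mul_pow_mul_one_sub_div_pow_le k T (by linarith : (0 : ℝ) < 1 - r).ne'
          (by linarith)
    _ ≤ (μ (⋃ i, (A i)ᶜ)).toReal := by
        simpa [measureReal_def] using
          card_mul_sub_choose_two_mul_le_measureReal_iUnion_of_exchangeable hB h_finite
            (g := fun j => (1 - (j : ℝ) * r) ^ T) h_real

/-- For `k ≥ 2` and `r ∈ (0, 1/(2k)]`, if `A_i` are events with
`P(⋂_{i∈J} A_iᶜ) = (1 - |J| r)^T` for every nonempty `J`, then inclusion–exclusion gives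
`P(⋃ A_iᶜ) = -∑_{j=1}^k (-1)^j (k choose j)(1 - j r)^T
  ≥ k (1-r)^T (1 - (k/2) ((1-2r)/(1-r))^T)`. -/
theorem prob_union_compl_lower_bound {Ω : Type*} [MeasurableSpace Ω]
    (μ : Measure Ω) [IsProbabilityMeasure μ] (k T : ℕ) (hk : 2 ≤ k) (r : ℝ)
    (hr0 : 0 < r) (hr1 : r ≤ 1 / (2 * k))
    (A : Fin k → Set Ω) (hA : ∀ i, MeasurableSet (A i))
    (hJ : ∀ J : Finset (Fin k), J.Nonempty →
      μ (⋂ i ∈ J, (A i)ᶜ) = ENNReal.ofReal ((1 - (J.card : ℝ) * r) ^ T)) :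
    (μ (⋃ i, (A i)ᶜ)).toReal =
      -∑ j ∈ Finset.Icc 1 k,
        (-1 : ℝ) ^ j * (k.choose j : ℝ) * (1 - (j : ℝ) * r) ^ T ∧
    (k : ℝ) * (1 - r) ^ T * (1 - (k : ℝ) / 2 * ((1 - 2 * r) / (1 - r)) ^ T) ≤
      -∑ j ∈ Finset.Icc 1 k,
        (-1 : ℝ) ^ j * (k.choose j : ℝ) * (1 - (j : ℝ) * r) ^ T :=
  prob_union_compl_lower_bound_general μ k T r hr1 A hA hJ
end
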